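/- arXiv:1205.3649 — 5 statements merged into one kernel-verified Lean document; each statement's English description precedes it below -/
import Mathlib

section
/- Let G be a countable group equipped with the counting measure |·|. Then every weak Følner sequence in G is also a strong Følner sequence; in fact, for all finite nonempty K, T ⊆ G, setting L_K := K ∪ K⁻¹ ∪ {id}, one has ∂_K(T) ⊆ L_K (T △ L_K T), and hence |∂_K(T)| ≤ |L_K| · |T △ L_K T|. -/
open Set Filter Pointwise

/-- The `K`-boundary of a set `T` in a group `G`. -/
def kBoundary {G : Type*} [Group G] (K T : Set G) : Set G :=
  {g : G | ((fun k => k * g) '' K ∩ T).Nonempty ∧ ((fun k => k * g) '' K ∩ Tᶜ).Nonempty}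

/-- A weak Følner sequence in a countable group with counting measure. -/
def IsWeakFolnerC {G : Type*} [Group G] (F : ℕ → Set G) : Prop :=
  (∀ n, (F n).Finite ∧ (F n).Nonempty) ∧
    ∀ K : Set G, K.Finite → K.Nonempty →
      Tendsto (fun n => ((symmDiff (F n) (K * F n)).ncard : ℝ) / ((F n).ncard : ℝ))
        atTop (nhds 0)

/-- A strong Følner sequence in a countable group with counting measure. -/
def IsStrongFolnerC {G : Type*} [Group G] (F : ℕ → Set G) : Prop :=
  (∀ n, (F n).Finite ∧ (F n).Nonempty) ∧
    ∀ K : Set G, K.Finite → K.Nonempty →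
      Tendsto (fun n => ((kBoundary K (F n)).ncard : ℝ) / ((F n).ncard : ℝ))
        atTop (nhds 0)

lemma kBoundary_subset_aux {G : Type*} [Group G] (K T : Set G) :
    kBoundary K T ⊆ (K ∪ K⁻¹ ∪ {1}) * symmDiff T ((K ∪ K⁻¹ ∪ {1}) * T) := by
  set L : Set G := K ∪ K⁻¹ ∪ {1} with hL
  rintro g ⟨⟨_, ⟨⟨k₁, hk₁, rfl⟩, hk₁T⟩⟩, ⟨_, ⟨⟨k₂, hk₂, rfl⟩, hk₂T⟩⟩⟩
  simp only [mem_compl_iff] at hk₂T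
  by_cases hg : g ∈ T
  · -- k₂ * g ∈ L*T \ T
    refine ⟨k₂⁻¹, Or.inl (Or.inr (Set.inv_mem_inv.2 hk₂)), k₂ * g, ?_, by group⟩
    rw [Set.mem_symmDiff]
    exact Or.inr ⟨⟨k₂, Or.inl (Or.inl hk₂), g, hg, rfl⟩, hk₂T⟩
  · -- g ∈ L*T \ T
    refine ⟨1, Or.inr rfl, g, ?_, one_mul g⟩
    rw [Set.mem_symmDiff]
    exact Or.inr ⟨⟨k₁⁻¹, Or.inl (Or.inr (Set.inv_mem_inv.2 hk₁)), k₁ * g, hk₁T, by group⟩, hg⟩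

lemma kBoundary_card_aux {G : Type*} [Group G] (K T : Set G)
    (hK : K.Finite) (hT : T.Finite) :
    (kBoundary K T).ncard ≤
      (K ∪ K⁻¹ ∪ {1}).ncard * (symmDiff T ((K ∪ K⁻¹ ∪ {1}) * T)).ncard := by
  set L : Set G := K ∪ K⁻¹ ∪ {1} with hL
  have hLfin : L.Finite := (hK.union hK.inv).union (finite_singleton 1)
  have hSfin : (symmDiff T (L * T)).Finite :=
    (hT.union (hLfin.mul hT)).subset symmDiff_le_sup
  have h1 : (kBoundary K T).ncard ≤ (L * symmDiff T (L * T)).ncard :=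
    Set.ncard_le_ncard (kBoundary_subset_aux K T) (hLfin.mul hSfin)
  refine h1.trans ?_
  have := Set.natCard_mul_le (s := L) (t := symmDiff T (L * T))
  simpa [Set.ncard_eq_toFinset_card', Nat.card_coe_set_eq, Set.ncard] using this

theorem stmt_3 {G : Type*} [Group G] [Countable G] :
    (∀ K T : Set G, K.Finite → T.Finite → K.Nonempty → T.Nonempty →
      kBoundary K T ⊆ (K ∪ K⁻¹ ∪ {1}) * symmDiff T ((K ∪ K⁻¹ ∪ {1}) * T) ∧
      (kBoundary K T).ncard ≤
        (K ∪ K⁻¹ ∪ {1}).ncard * (symmDiff T ((K ∪ K⁻¹ ∪ {1}) * T)).ncard) ∧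
    ∀ F : ℕ → Set G, IsWeakFolnerC F → IsStrongFolnerC F := by
  constructor
  · intro K T hK hT _ _
    exact ⟨kBoundary_subset_aux K T, kBoundary_card_aux K T hK hT⟩
  · rintro F ⟨hF, hweak⟩
    refine ⟨hF, fun K hK hKne => ?_⟩
    set L : Set G := K ∪ K⁻¹ ∪ {1} with hL
    have hLfin : L.Finite := (hK.union hK.inv).union (finite_singleton 1)
    have hLne : L.Nonempty := ⟨1, Or.inr rfl⟩
    have htend := (hweak L hLfin hLne).const_mul (L.ncard : ℝ)
    rw [mul_zero] at htend
    refine squeeze_zero (fun n => by positivity) (fun n => ?_) htend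
    rw [← mul_div_assoc]
    gcongr
    exact_mod_cast kBoundary_card_aux K (F n) hK (hF n).1
end

section
/- Let 0 < ε < 1 and set N(ε) := ⌈log(ε)/log(1−ε)⌉. If (α_i)_{i∈ℕ} is a complex-valued sequence converging to 0, then lim_{ε→0⁺} Σ_{i=1}^{N(ε)} ε(1−ε)^{N(ε)−i} · α_i = 0. -/
open Filter

/-- `N(ε) = ⌈log(ε)/log(1-ε)⌉`. -/
noncomputable def Nfun (ε : ℝ) : ℕ := (⌈Real.log ε / Real.log (1 - ε)⌉).toNat

/-!
The weights `ε (1-ε)^(N-i)`, `1 ≤ i ≤ N`, have total mass `1 - (1-ε)^N ≤ 1` and are each at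
most `ε`, whatever `N = N(ε)` is; so they form a regular (Toeplitz) summation method. Choose `M`
with `|α_i|` small for `i ≥ M`: the tail of the sum is small by the mass bound, and the `M` head
terms vanish as `ε → 0`.
-/

open Finset Topology

section Toeplitz

variable {𝕜 E : Type*} [NormedField 𝕜] [SeminormedAddCommGroup E] [NormedSpace 𝕜 E]

theorem norm_sum_smul_le_of_norm_le {s : Finset ℕ} {w : ℕ → 𝕜} {α : ℕ → E} {M : ℕ}
    {B C η : ℝ} (hB : ∑ i ∈ s, ‖w i‖ ≤ B) (hC : ∀ i, ‖α i‖ ≤ C) (hη : 0 ≤ η)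
    (hM : ∀ i ≥ M, ‖α i‖ ≤ η) :
    ‖∑ i ∈ s, w i • α i‖ ≤ B * η + C * ∑ i ∈ range M, ‖w i‖ := by
  have hC0 : 0 ≤ C := (norm_nonneg _).trans (hC 0)
  have head : ∑ i ∈ s with i < M, ‖w i‖ * ‖α i‖ ≤ (∑ i ∈ range M, ‖w i‖) * C := by
    rw [sum_mul]
    calc ∑ i ∈ s with i < M, ‖w i‖ * ‖α i‖
        ≤ ∑ i ∈ s with i < M, ‖w i‖ * C :=
          sum_le_sum fun i _ => mul_le_mul_of_nonneg_left (hC i) (norm_nonneg _)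
      _ ≤ ∑ i ∈ range M, ‖w i‖ * C :=
          sum_le_sum_of_subset_of_nonneg (fun i hi => by simpa using (mem_filter.1 hi).2)
            fun i _ _ => by positivity
  have tail : ∑ i ∈ s with ¬i < M, ‖w i‖ * ‖α i‖ ≤ B * η := by
    calc ∑ i ∈ s with ¬i < M, ‖w i‖ * ‖α i‖
        ≤ ∑ i ∈ s with ¬i < M, ‖w i‖ * η :=
          sum_le_sum fun i hi =>
            mul_le_mul_of_nonneg_left (hM i (not_lt.1 (mem_filter.1 hi).2)) (norm_nonneg _)
      _ ≤ (∑ i ∈ s, ‖w i‖) * η := by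
          rw [sum_mul]
          exact sum_le_sum_of_subset_of_nonneg (filter_subset _ _) fun i _ _ => by positivity
      _ ≤ B * η := mul_le_mul_of_nonneg_right hB hη
  calc ‖∑ i ∈ s, w i • α i‖ ≤ ∑ i ∈ s, ‖w i‖ * ‖α i‖ := by
        simpa only [norm_smul] using norm_sum_le s fun i => w i • α i
    _ = ∑ i ∈ s with i < M, ‖w i‖ * ‖α i‖ + ∑ i ∈ s with ¬i < M, ‖w i‖ * ‖α i‖ :=
        (sum_filter_add_sum_filter_not s _ _).symm
    _ ≤ B * η + C * ∑ i ∈ range M, ‖w i‖ := by linarith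

/-- Sufficiency half of the Silverman–Toeplitz theorem for null sequences. -/
theorem tendsto_sum_smul_of_tendsto_zero {X : Type*} {l : Filter X} {s : X → Finset ℕ}
    {w : X → ℕ → 𝕜} {α : ℕ → E} {B : ℝ} (hα : Tendsto α atTop (𝓝 0))
    (hw : ∀ i, Tendsto (fun x => w x i) l (𝓝 0)) (hB : ∀ᶠ x in l, ∑ i ∈ s x, ‖w x i‖ ≤ B) :
    Tendsto (fun x => ∑ i ∈ s x, w x i • α i) l (𝓝 0) := by
  rw [NormedAddGroup.tendsto_nhds_zero]
  intro δ hδ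
  obtain ⟨C, hC⟩ : ∃ C, ∀ i, ‖α i‖ ≤ C := by
    obtain ⟨C, hC⟩ := hα.norm.bddAbove_range
    exact ⟨C, fun i => hC ⟨i, rfl⟩⟩
  set η := δ / (2 * (|B| + 1)) with hη_def
  have hη : 0 < η := by positivity
  have hBη : B * η < δ / 2 := by
    have : (|B| + 1) * η = δ / 2 := by rw [hη_def]; field_simp
    nlinarith [le_abs_self B]
  obtain ⟨M, hM⟩ := eventually_atTop.1 (NormedAddGroup.tendsto_nhds_zero.1 hα η hη)
  have head : Tendsto (fun x => C * ∑ i ∈ range M, ‖w x i‖) l (𝓝 0) := by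
    simpa using ((tendsto_finsetSum _ fun i _ => (hw i).norm).const_mul C)
  filter_upwards [hB, head.eventually (gt_mem_nhds (half_pos hδ))] with x hxB hxhead
  calc ‖∑ i ∈ s x, w x i • α i‖ ≤ B * η + C * ∑ i ∈ range M, ‖w x i‖ :=
        norm_sum_smul_le_of_norm_le hxB hC hη.le fun i hi => (hM i hi).le
    _ < δ := by linarith

end Toeplitz

theorem sum_Icc_mul_one_sub_pow {R : Type*} [CommRing R] (ε : R) (N : ℕ) :
    ∑ i ∈ Icc 1 N, ε * (1 - ε) ^ (N - i) = 1 - (1 - ε) ^ N := by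
  have hreflect : ∑ i ∈ Icc 1 N, (1 - ε) ^ (N - i) = ∑ j ∈ range N, (1 - ε) ^ j :=
    sum_nbij' (fun i => N - i) (fun j => N - j) (by simp; omega) (by simp; omega)
      (by simp; omega) (by simp; omega) fun _ _ => rfl
  rw [← mul_sum, hreflect]
  linear_combination (-1 : R) * geom_sum_mul (1 - ε) N

theorem norm_ofReal_mul_one_sub_pow {ε : ℝ} (h0 : 0 ≤ ε) (h1 : ε ≤ 1) (k : ℕ) :
    ‖(ε : ℂ) * (1 - ε) ^ k‖ = ε * (1 - ε) ^ k := by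
  rw [← Complex.ofReal_one, ← Complex.ofReal_sub, ← Complex.ofReal_pow, ← Complex.ofReal_mul,
    Complex.norm_real, Real.norm_of_nonneg (mul_nonneg h0 (pow_nonneg (sub_nonneg.2 h1) k))]

theorem sum_Icc_norm_ofReal_mul_one_sub_pow_le_one {ε : ℝ} (h0 : 0 ≤ ε) (h1 : ε ≤ 1) (N : ℕ) :
    ∑ i ∈ Icc 1 N, ‖(ε : ℂ) * (1 - ε) ^ (N - i)‖ ≤ 1 := by
  simp only [norm_ofReal_mul_one_sub_pow h0 h1, sum_Icc_mul_one_sub_pow]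
  linarith [pow_nonneg (sub_nonneg.2 h1) N]

theorem tendsto_ofReal_mul_one_sub_pow (n : ℝ → ℕ) :
    Tendsto (fun ε : ℝ => (ε : ℂ) * (1 - ε) ^ n ε) (𝓝[Set.Icc 0 1] 0) (𝓝 0) := by
  refine squeeze_zero_norm' ?_ (tendsto_nhdsWithin_of_tendsto_nhds tendsto_id)
  filter_upwards [self_mem_nhdsWithin] with ε ⟨h0, h1⟩
  rw [norm_ofReal_mul_one_sub_pow h0 h1]
  exact mul_le_of_le_one_right h0 (pow_le_one₀ (sub_nonneg.2 h1) (by linarith))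

/-- If `(α_i)` is a complex null sequence then
`Σ_{i=1}^{N(ε)} ε (1-ε)^{N(ε)-i} α_i → 0` as `ε → 0⁺` (with `0 < ε < 1`). -/
theorem stmt_4 (α : ℕ → ℂ) (hα : Tendsto α atTop (nhds 0)) :
    Tendsto
      (fun ε : ℝ => ∑ i ∈ Finset.Icc 1 (Nfun ε),
        (ε : ℂ) * ((1 : ℂ) - (ε : ℂ)) ^ (Nfun ε - i) * α i)
      (nhdsWithin 0 (Set.Ioo (0 : ℝ) 1)) (nhds 0) := by
  have hfilter : 𝓝[Set.Ioo (0 : ℝ) 1] 0 ≤ 𝓝[Set.Icc 0 1] 0 :=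
    nhdsWithin_mono _ Set.Ioo_subset_Icc_self
  have hweight (i : ℕ) : Tendsto (fun ε : ℝ => (ε : ℂ) * (1 - ε) ^ (Nfun ε - i))
      (𝓝[Set.Ioo 0 1] 0) (𝓝 0) :=
    (tendsto_ofReal_mul_one_sub_pow fun ε => Nfun ε - i).mono_left hfilter
  have hmass : ∀ᶠ ε in 𝓝[Set.Ioo 0 1] 0,
      ∑ i ∈ Icc 1 (Nfun ε), ‖(ε : ℂ) * (1 - ε) ^ (Nfun ε - i)‖ ≤ 1 := by
    filter_upwards [self_mem_nhdsWithin] with ε ⟨h0, h1⟩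
    exact sum_Icc_norm_ofReal_mul_one_sub_pow_le_one h0.le h1.le _
  simpa only [smul_eq_mul] using tendsto_sum_smul_of_tendsto_zero hα hweight hmass
end

section
/- Let G be a unimodular locally compact Hausdorff group with Haar measure |·|, let K ⊆ G be a nonempty compact set containing the identity, let 0 < δ < 1 and let T ⊆ G be compact and (K, δ)-invariant. Set S := {g ∈ G : Kg ⊆ T}. Then: (i) |S| ≥ (1−δ)|T|; (ii) for every g ∈ G the Haar measure of {c ∈ S : g ∈ Kc} is at most |K|, i.e. ∫_S 1_{Kc}(g) dc ≤ |K|. -/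
/-!
Since `1 ∈ K`, every `g ∈ T` either has `Kg ⊆ T` or lies in the `K`-boundary of `T`,
so `|T| ≤ |S| + |∂_K T| < |S| + δ|T|`. For the second claim, `{c : g ∈ Kc} = K⁻¹g`, whose measure
is `|K⁻¹| = |K|` by right invariance and unimodularity: `μ.inv` is a left Haar measure, hence
`μ s⁻¹ = c μ s` on compact sets, and applying this twice forces `c = 1`.
-/

open MeasureTheory Set
open scoped NNReal ENNReal

theorem ENNReal.one_sub_mul_le_of_le_add_of_lt_mul {a s b ε : ℝ≥0∞} (h : a ≤ s + b)
    (hb : b < ε * a) : (1 - ε) * a ≤ s := by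
  by_cases ha : a = ∞
  · have hs : s = ∞ := by
      subst ha
      exact (ENNReal.add_eq_top.1 (top_le_iff.1 h)).resolve_right hb.ne_top
    simp [hs]
  calc (1 - ε) * a = a - ε * a := by
        rw [ENNReal.sub_mul fun _ _ => ha, one_mul]
    _ ≤ a - b := tsub_le_tsub_left hb.le a
    _ ≤ s := tsub_le_iff_right.2 h

section Group

variable {G : Type*} [Group G]

def kInterior (K T : Set G) : Set G :=
  {g : G | (fun k => k * g) '' K ⊆ T}

theorem subset_kInterior_union_kBoundary {K T : Set G} (h1K : (1 : G) ∈ K) :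
    T ⊆ kInterior K T ∪ kBoundary K T := by
  intro g hg
  rw [mem_union, or_iff_not_imp_left]
  intro hgS
  obtain ⟨x, hxK, hxT⟩ := not_subset.1 hgS
  exact ⟨⟨g, ⟨1, h1K, one_mul g⟩, hg⟩, ⟨x, hxK, hxT⟩⟩

theorem setOf_mem_image_mul_right_eq_preimage (K : Set G) (g : G) :
    {c : G | g ∈ (fun k => k * c) '' K} = (fun c => c * g⁻¹) ⁻¹' K⁻¹ := by
  ext c
  simp only [mem_image, mem_preimage, mem_inv, mul_inv_rev, inv_inv]
  constructor
  · rintro ⟨k, hk, rfl⟩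
    simpa [mul_assoc] using hk
  · intro hc
    exact ⟨g * c⁻¹, hc, by group⟩

end Group

section Haar

variable {G : Type*} [Group G] [TopologicalSpace G] [IsTopologicalGroup G]
  [LocallyCompactSpace G] [MeasurableSpace G] [BorelSpace G]

theorem MeasureTheory.Measure.measure_inv_of_isCompact (μ : Measure G) [μ.IsHaarMeasure]
    [μ.IsMulRightInvariant] {s : Set G} (hs : IsCompact s) : μ s⁻¹ = μ s := by
  set c : ℝ≥0 := μ.inv.haarScalarFactor μ
  have inv_eq : ∀ s : Set G, IsCompact s → μ s⁻¹ = c * μ s := fun s hs => by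
    rw [← Measure.inv_apply,
      μ.inv.measure_isMulInvariant_eq_smul_of_isCompact_closure μ hs.closure,
      ENNReal.smul_def, smul_eq_mul]
  obtain ⟨P⟩ : Nonempty (TopologicalSpace.PositiveCompacts G) := inferInstance
  have hc : c = 1 := by
    have hP0 : μ P ≠ 0 := (μ.measure_pos_of_nonempty_interior P.interior_nonempty).ne'
    have hP : ((c ^ 2 : ℝ≥0) : ℝ≥0∞) * μ P = (1 : ℝ≥0) * μ P := by
      conv_rhs => rw [ENNReal.coe_one, one_mul, ← inv_inv (P : Set G), inv_eq _ P.isCompact.inv,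
        inv_eq _ P.isCompact]
      rw [ENNReal.coe_pow, sq, mul_assoc]
    rw [ENNReal.mul_left_inj hP0 P.isCompact.measure_lt_top.ne, ENNReal.coe_inj] at hP
    exact (pow_eq_one_iff.1 hP).resolve_right two_ne_zero
  rw [inv_eq s hs, hc, ENNReal.coe_one, one_mul]

end Haar

theorem stmt_5_general {G : Type*} [Group G] [TopologicalSpace G] [IsTopologicalGroup G]
    [LocallyCompactSpace G] [MeasurableSpace G] [BorelSpace G]
    (μ : Measure G) [μ.IsHaarMeasure] [μ.IsMulRightInvariant]
    (K T : Set G) (hKc : IsCompact K) (h1K : (1 : G) ∈ K)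
    (δ : ℝ) (hδ0 : 0 < δ)
    (hinv : μ (kBoundary K T) < ENNReal.ofReal δ * μ T) :
    ENNReal.ofReal (1 - δ) * μ T ≤ μ {g : G | (fun k => k * g) '' K ⊆ T} ∧
    ∀ g : G,
      μ {c : G | (fun k => k * c) '' K ⊆ T ∧ g ∈ (fun k => k * c) '' K} ≤ μ K := by
  refine ⟨?_, fun g => ?_⟩
  · rw [ENNReal.ofReal_sub _ hδ0.le, ENNReal.ofReal_one]
    refine ENNReal.one_sub_mul_le_of_le_add_of_lt_mul ?_ hinv
    exact (measure_mono (subset_kInterior_union_kBoundary h1K)).trans (measure_union_le _ _)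
  · calc μ {c : G | (fun k => k * c) '' K ⊆ T ∧ g ∈ (fun k => k * c) '' K}
        ≤ μ {c : G | g ∈ (fun k => k * c) '' K} := measure_mono fun c hc => hc.2
      _ = μ K := by
        rw [setOf_mem_image_mul_right_eq_preimage, measure_preimage_mul_right,
          μ.measure_inv_of_isCompact hKc]

theorem stmt_5 {G : Type*} [Group G] [TopologicalSpace G] [IsTopologicalGroup G] [T2Space G]
    [LocallyCompactSpace G] [MeasurableSpace G] [BorelSpace G]
    (μ : Measure G) [μ.IsHaarMeasure] [μ.IsMulRightInvariant]
    (K T : Set G) (hKc : IsCompact K) (hKne : K.Nonempty) (h1K : (1 : G) ∈ K)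
    (hTc : IsCompact T) (δ : ℝ) (hδ0 : 0 < δ) (hδ1 : δ < 1)
    (hTpos : 0 < μ T) (hinv : μ (kBoundary K T) < ENNReal.ofReal δ * μ T) :
    ENNReal.ofReal (1 - δ) * μ T ≤ μ {g : G | (fun k => k * g) '' K ⊆ T} ∧
    ∀ g : G,
      μ {c : G | (fun k => k * c) '' K ⊆ T ∧ g ∈ (fun k => k * c) '' K} ≤ μ K :=
  stmt_5_general μ K T hKc h1K δ hδ0 hinv
end

section
/- In the bond percolation model on the Cayley graph of a finitely generated group G with finite symmetric generating set S, the following holds: for every configuration ω ∈ Ω, every finite Λ ⊆ G, and every partition of Λ into pairwise disjoint finite sets Λ₁, …, Λ_k with ∪_{i=1}^k Λ_i = Λ, one has |F_ω(Λ)(m) − Σ_{i=1}^k F_ω(Λ_i)(m)| ≤ 2|S| Σ_{i=1}^k |∂¹(Λ_i)| for all m ∈ ℝ. -/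
open Set

/-- One step of an active path within `Λ`: `a, c ∈ Λ` are adjacent in the Cayley graph
(`c a⁻¹ ∈ S`) and the edge `[a,c]` is active in the configuration `ω`. -/
def percStep {G : Type*} [Group G] (S : Finset G) (ω : G → G → Bool) (Λ : Set G)
    (a c : G) : Prop :=
  a ∈ Λ ∧ c ∈ Λ ∧ c * a⁻¹ ∈ S ∧ ω a (c * a⁻¹) = true ∧ ω c (a * c⁻¹) = true

/-- The cluster `C_x^Λ(ω)` of `x` in the configuration `ω`, via active paths with all
vertices in `Λ`. -/
def percCluster {G : Type*} [Group G] (S : Finset G) (ω : G → G → Bool) (Λ : Set G)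
    (x : G) : Set G :=
  {y | Relation.ReflTransGen (percStep S ω Λ) x y}

/-- `F_ω(Λ)(m)`: the number of clusters in `Λ` of size at most `m`. -/
noncomputable def Fdist {G : Type*} [Group G] (S : Finset G) (ω : G → G → Bool)
    (Λ : Set G) (m : ℝ) : ℕ :=
  Set.ncard {c : Set G | (∃ x ∈ Λ, c = percCluster S ω Λ x) ∧ (c.ncard : ℝ) ≤ m}

/-- The `1`-boundary `∂¹(Λ)` with respect to the word metric of `S`. -/
def boundary1 {G : Type*} [Group G] (S : Finset G) (Λ : Set G) : Set G :=
  {x | x ∈ Λ ∧ ∃ s ∈ S, s * x ∉ Λ} ∪ {x | x ∉ Λ ∧ ∃ s ∈ S, s * x ∈ Λ}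

/-!
Cut every piece `Λᵢ` along its inner boundary `Dᵢ = {x ∈ Λᵢ | some S-neighbour of x lies outside
Λᵢ}` and put `D = ⋃ Dᵢ`. A cluster of `Λᵢ` avoiding `D` has no active edge leaving `Λᵢ`, so it is
also a cluster of `Λ`; conversely a cluster of `Λ` avoiding `D` is a cluster of the piece
containing it. Hence the two families of clusters agree away from `D`, and since clusters are
pairwise disjoint, each family has at most `|D| ≤ ∑ |∂¹Λᵢ|` members meeting `D`.
-/

open Function

section DisjointFamilies

variable {α : Type*} {𝒜 ℬ : Set (Set α)} {D : Set α}

lemma ncard_sep_not_disjoint_le (h𝒜 : 𝒜.PairwiseDisjoint id) (hD : D.Finite) :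
    {c ∈ 𝒜 | ¬Disjoint c D}.ncard ≤ D.ncard := by
  obtain rfl | ⟨x₀, -⟩ := D.eq_empty_or_nonempty
  · simp
  have : Nonempty α := ⟨x₀⟩ -- for `choose!`
  have hmeet : ∀ c ∈ {c ∈ 𝒜 | ¬Disjoint c D}, ∃ x ∈ D, x ∈ c := fun c hc =>
    let ⟨x, hxc, hxD⟩ := not_disjoint_iff.1 hc.2
    ⟨x, hxD, hxc⟩
  choose! f hfD hfc using hmeet
  refine ncard_le_ncard_of_injOn f hfD (fun c hc c' hc' hcc' => ?_) hD
  by_contra hne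
  exact disjoint_left.1 (h𝒜 hc.1 hc'.1 hne) (hfc c hc) (hcc' ▸ hfc c' hc')

lemma ncard_eq_sep_disjoint_add_sep_not_disjoint (h𝒜 : 𝒜.Finite) :
    𝒜.ncard = {c ∈ 𝒜 | Disjoint c D}.ncard + {c ∈ 𝒜 | ¬Disjoint c D}.ncard :=
  (ncard_inter_add_ncard_sdiff_eq_ncard 𝒜 {c | Disjoint c D} h𝒜).symm

lemma abs_ncard_sub_ncard_le_of_sep_disjoint_eq (h𝒜 : 𝒜.Finite) (hℬ : ℬ.Finite)
    (h𝒜D : 𝒜.PairwiseDisjoint id) (hℬD : ℬ.PairwiseDisjoint id) (hD : D.Finite)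
    (h : {c ∈ 𝒜 | Disjoint c D} = {c ∈ ℬ | Disjoint c D}) :
    |(𝒜.ncard : ℝ) - ℬ.ncard| ≤ D.ncard := by
  have h𝒜bad := ncard_sep_not_disjoint_le h𝒜D hD
  have hℬbad := ncard_sep_not_disjoint_le hℬD hD
  rw [ncard_eq_sep_disjoint_add_sep_not_disjoint (D := D) h𝒜,
    ncard_eq_sep_disjoint_add_sep_not_disjoint (D := D) hℬ, h, abs_le]
  push_cast
  constructor <;> linarith [(Nat.cast_le (α := ℝ)).2 h𝒜bad, (Nat.cast_le (α := ℝ)).2 hℬbad]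

end DisjointFamilies

section Percolation

variable {G : Type*} [Group G] {S : Finset G} {ω : G → G → Bool} {Λ Λ' D : Set G} {x y : G}

def smallPercClusters (S : Finset G) (ω : G → G → Bool) (Λ : Set G) (m : ℝ) : Set (Set G) :=
  {c | (∃ x ∈ Λ, c = percCluster S ω Λ x) ∧ (c.ncard : ℝ) ≤ m}

lemma Fdist_eq_ncard_smallPercClusters (m : ℝ) :
    Fdist S ω Λ m = (smallPercClusters S ω Λ m).ncard :=
  rfl

def innerBoundary (S : Finset G) (Λ : Set G) : Set G :=
  {x | x ∈ Λ ∧ ∃ s ∈ S, s * x ∉ Λ}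

lemma percStep_symm (hsym : ∀ s ∈ S, s⁻¹ ∈ S) : Std.Symm (percStep S ω Λ) where
  symm _ _ := fun ⟨ha, hc, hs, hac, hca⟩ => ⟨hc, ha, by simpa using hsym _ hs, hca, hac⟩

lemma mem_percCluster_self : x ∈ percCluster S ω Λ x :=
  Relation.ReflTransGen.refl

lemma percCluster_subset (hx : x ∈ Λ) : percCluster S ω Λ x ⊆ Λ := by
  intro y hy
  induction hy with
  | refl => exact hx
  | tail _ hstep _ => exact hstep.2.1

lemma percCluster_mono (h : Λ' ⊆ Λ) : percCluster S ω Λ' x ⊆ percCluster S ω Λ x :=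
  Relation.ReflTransGen.mono (fun _ _ ⟨ha, hc, hs, hac, hca⟩ => ⟨h ha, h hc, hs, hac, hca⟩) x

lemma percCluster_eq_of_mem (hsym : ∀ s ∈ S, s⁻¹ ∈ S) (hy : y ∈ percCluster S ω Λ x) :
    percCluster S ω Λ x = percCluster S ω Λ y := by
  have := percStep_symm (ω := ω) (Λ := Λ) hsym
  have hyx : Relation.ReflTransGen (percStep S ω Λ) y x := Std.Symm.symm _ _ hy
  ext z
  exact ⟨hyx.trans, hy.trans⟩

lemma percCluster_eq_of_disjoint (hΛ' : Λ' ⊆ Λ) (hD : innerBoundary S Λ' ⊆ D) (hx : x ∈ Λ')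
    (h : Disjoint (percCluster S ω Λ' x) D) : percCluster S ω Λ x = percCluster S ω Λ' x := by
  refine Subset.antisymm ?_ (percCluster_mono hΛ')
  intro z hz
  induction hz with
  | refl => exact mem_percCluster_self
  | @tail b c _ hbc ih =>
    obtain ⟨-, -, hs, hbc, hcb⟩ := hbc
    have hb : b ∈ Λ' := percCluster_subset hx ih
    have hc : c ∈ Λ' := by
      by_contra hc
      exact disjoint_left.1 h ih (hD ⟨hb, _, hs, by simpa using hc⟩)
    exact ih.tail ⟨hb, hc, hs, hbc, hcb⟩

lemma subset_of_mem_smallPercClusters {c : Set G} {m : ℝ} (hc : c ∈ smallPercClusters S ω Λ m) :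
    c ⊆ Λ := by
  obtain ⟨⟨x, hx, rfl⟩, -⟩ := hc
  exact percCluster_subset hx

lemma nonempty_of_mem_smallPercClusters {c : Set G} {m : ℝ}
    (hc : c ∈ smallPercClusters S ω Λ m) : c.Nonempty := by
  obtain ⟨⟨x, -, rfl⟩, -⟩ := hc
  exact ⟨x, mem_percCluster_self⟩

lemma smallPercClusters_finite (hΛ : Λ.Finite) (m : ℝ) : (smallPercClusters S ω Λ m).Finite :=
  hΛ.finite_subsets.subset fun _ hc => subset_of_mem_smallPercClusters hc

lemma pairwiseDisjoint_smallPercClusters (hsym : ∀ s ∈ S, s⁻¹ ∈ S) (m : ℝ) :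
    (smallPercClusters S ω Λ m).PairwiseDisjoint id := by
  rintro _ ⟨⟨x, -, rfl⟩, -⟩ _ ⟨⟨y, -, rfl⟩, -⟩ hne
  refine disjoint_left.2 fun z hzx hzy => hne ?_
  rw [percCluster_eq_of_mem hsym hzx, percCluster_eq_of_mem hsym hzy]

variable {ι : Type*} {Λi : ι → Set G}

lemma pairwiseDisjoint_iUnion_smallPercClusters (hsym : ∀ s ∈ S, s⁻¹ ∈ S)
    (hdisj : Pairwise (Disjoint on Λi)) (m : ℝ) :
    (⋃ i, smallPercClusters S ω (Λi i) m).PairwiseDisjoint id := by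
  intro c hc c' hc' hne
  obtain ⟨i, hci⟩ := mem_iUnion.1 hc
  obtain ⟨j, hcj⟩ := mem_iUnion.1 hc'
  rcases eq_or_ne i j with rfl | hij
  · exact pairwiseDisjoint_smallPercClusters hsym m hci hcj hne
  · exact (hdisj hij).mono (subset_of_mem_smallPercClusters hci)
      (subset_of_mem_smallPercClusters hcj)

lemma ncard_iUnion_smallPercClusters [Fintype ι] (hfin : ∀ i, (Λi i).Finite)
    (hdisj : Pairwise (Disjoint on Λi)) (m : ℝ) :
    (⋃ i, smallPercClusters S ω (Λi i) m).ncard = ∑ i, (smallPercClusters S ω (Λi i) m).ncard := by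
  rw [ncard_iUnion_of_finite (fun i => smallPercClusters_finite (hfin i) m), finsum_eq_sum_of_fintype]
  intro i j hij
  refine disjoint_left.2 fun c hci hcj => ?_
  obtain ⟨z, hz⟩ := nonempty_of_mem_smallPercClusters hci
  exact disjoint_left.1 (hdisj hij) (subset_of_mem_smallPercClusters hci hz)
    (subset_of_mem_smallPercClusters hcj hz)

lemma sep_disjoint_smallPercClusters_eq (hunion : (⋃ i, Λi i) = Λ) (m : ℝ) :
    {c ∈ smallPercClusters S ω Λ m | Disjoint c (⋃ i, innerBoundary S (Λi i))} =
      {c ∈ ⋃ i, smallPercClusters S ω (Λi i) m | Disjoint c (⋃ i, innerBoundary S (Λi i))} := by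
  have hsub : ∀ i, Λi i ⊆ Λ := fun i => hunion ▸ subset_iUnion Λi i
  have hinner : ∀ i, innerBoundary S (Λi i) ⊆ ⋃ j, innerBoundary S (Λi j) :=
    subset_iUnion (fun j => innerBoundary S (Λi j))
  ext c
  constructor
  · rintro ⟨⟨⟨x, hx, rfl⟩, hm⟩, hc⟩
    obtain ⟨i, hxi⟩ := mem_iUnion.1 (hunion.symm ▸ hx)
    have heq := percCluster_eq_of_disjoint (hsub i) (hinner i) hxi
      (hc.mono_left (percCluster_mono (hsub i)))
    exact ⟨mem_iUnion.2 ⟨i, ⟨x, hxi, heq⟩, hm⟩, hc⟩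
  · rintro ⟨hc, hcD⟩
    obtain ⟨i, ⟨x, hxi, rfl⟩, hm⟩ := mem_iUnion.1 hc
    exact ⟨⟨⟨x, hsub i hxi, (percCluster_eq_of_disjoint (hsub i) (hinner i) hxi hcD).symm⟩, hm⟩,
      hcD⟩

end Percolation

section Boundary

variable {G : Type*} [Group G] {S : Finset G} {Λ : Set G}

lemma boundary1_finite (hΛ : Λ.Finite) : (boundary1 S Λ).Finite := by
  refine (hΛ.subset fun x hx => hx.1).union ?_
  refine ((S.finite_toSet.biUnion fun s _ => hΛ.image (s⁻¹ * ·))).subset ?_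
  rintro x ⟨-, s, hs, hsx⟩
  exact mem_biUnion hs ⟨s * x, hsx, by group⟩

lemma innerBoundary_finite (hΛ : Λ.Finite) : (innerBoundary S Λ).Finite :=
  hΛ.subset fun _ hx => hx.1

lemma ncard_innerBoundary_le (hΛ : Λ.Finite) :
    ((innerBoundary S Λ).ncard : ℝ) ≤ 2 * S.card * (boundary1 S Λ).ncard := by
  rcases (innerBoundary S Λ).eq_empty_or_nonempty with h | ⟨x, -, s, hs, -⟩
  · rw [h, ncard_empty, Nat.cast_zero]
    positivity
  have hS : (1 : ℝ) ≤ 2 * S.card := by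
    have : (1 : ℝ) ≤ S.card := by exact_mod_cast Finset.card_pos.2 ⟨s, hs⟩
    linarith
  calc ((innerBoundary S Λ).ncard : ℝ) ≤ (boundary1 S Λ).ncard := by
        exact_mod_cast ncard_le_ncard subset_union_left (boundary1_finite hΛ)
    _ ≤ 2 * S.card * (boundary1 S Λ).ncard := le_mul_of_one_le_left (by positivity) hS

end Boundary

theorem stmt_14_general {G : Type*} [Group G] (S : Finset G)
    (hsym : ∀ s ∈ S, s⁻¹ ∈ S)
    (ω : G → G → Bool) (Λ : Set G) (hΛ : Λ.Finite)
    (k : ℕ) (Λi : Fin k → Set G) (hfin : ∀ i, (Λi i).Finite)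
    (hdisj : ∀ i j, i ≠ j → Disjoint (Λi i) (Λi j)) (hunion : (⋃ i, Λi i) = Λ) :
    ∀ m : ℝ, |(Fdist S ω Λ m : ℝ) - ∑ i, (Fdist S ω (Λi i) m : ℝ)| ≤
      2 * (S.card : ℝ) * ∑ i, ((boundary1 S (Λi i)).ncard : ℝ) := by
  intro m
  have hdisj' : Pairwise (Disjoint on Λi) := fun i j => hdisj i j
  calc |(Fdist S ω Λ m : ℝ) - ∑ i, (Fdist S ω (Λi i) m : ℝ)|
      = |((smallPercClusters S ω Λ m).ncard : ℝ) -
          (⋃ i, smallPercClusters S ω (Λi i) m).ncard| := by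
        simp only [Fdist_eq_ncard_smallPercClusters]
        rw [ncard_iUnion_smallPercClusters hfin hdisj', Nat.cast_sum]
    _ ≤ (⋃ i, innerBoundary S (Λi i)).ncard :=
        abs_ncard_sub_ncard_le_of_sep_disjoint_eq (smallPercClusters_finite hΛ m)
          (finite_iUnion fun i => smallPercClusters_finite (hfin i) m)
          (pairwiseDisjoint_smallPercClusters hsym m)
          (pairwiseDisjoint_iUnion_smallPercClusters hsym hdisj' m)
          (finite_iUnion fun i => innerBoundary_finite (hfin i))
          (sep_disjoint_smallPercClusters_eq hunion m)
    _ ≤ ∑ i, ((innerBoundary S (Λi i)).ncard : ℝ) := by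
        exact_mod_cast ncard_iUnion_le_of_fintype _
    _ ≤ ∑ i, 2 * (S.card : ℝ) * (boundary1 S (Λi i)).ncard :=
        Finset.sum_le_sum fun i _ => ncard_innerBoundary_le (hfin i)
    _ = 2 * (S.card : ℝ) * ∑ i, ((boundary1 S (Λi i)).ncard : ℝ) := (Finset.mul_sum ..).symm

/-- Almost additivity of the cluster counting functions `F_ω(Λ)` (Lemma 8.3). -/
theorem stmt_14 {G : Type*} [Group G] (S : Finset G)
    (hsym : ∀ s ∈ S, s⁻¹ ∈ S) (hgen : Subgroup.closure (S : Set G) = ⊤)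
    (ω : G → G → Bool) (Λ : Set G) (hΛ : Λ.Finite)
    (k : ℕ) (Λi : Fin k → Set G) (hfin : ∀ i, (Λi i).Finite)
    (hdisj : ∀ i j, i ≠ j → Disjoint (Λi i) (Λi j)) (hunion : (⋃ i, Λi i) = Λ) :
    ∀ m : ℝ, |(Fdist S ω Λ m : ℝ) - ∑ i, (Fdist S ω (Λi i) m : ℝ)| ≤
      2 * (S.card : ℝ) * ∑ i, ((boundary1 S (Λi i)).ncard : ℝ) :=
  stmt_14_general S hsym ω Λ hΛ k Λi hfin hdisj hunion
end

section
/- For bond percolation on the Cayley graph of a finitely generated amenable group G with finite symmetric generating set S, the mapping κ : [0,1)^S → (0,1], p ↦ κ(p) = 𝔼_p(|C_id|⁻¹), is continuous (where [0,1)^S carries the ℓ²-metric, and |C_id|⁻¹ := 0 when the cluster of the identity is infinite). -/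
open Set Filter MeasureTheory Pointwise

/-!
A cluster of the identity with `n + 1` vertices has radius at most `n`, so the event
`|C_id| = n + 1` only depends on the bonds at vertices within distance `n + 1` of the identity.
Hence `ℙ_p(|C_id| = n + 1)` is a finite sum of products of the numbers `p_s` and `1 - p_s`, a
continuous function of `p`. As these events are disjoint, the tail
`∑_{n ≥ N} ℙ_p(|C_id| = n + 1) / (n + 1)` is at most `1 / (N + 1)` uniformly in `p`, so `κ` is a
uniform limit of continuous functions.
-/

namespace Relation

variable {α : Type*} (r : α → α → Prop) (x : α)

def reachWithin : ℕ → Set α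
  | 0 => {x}
  | k + 1 => reachWithin k ∪ {c | ∃ a ∈ reachWithin k, r a c}

variable {r x}

theorem reachWithin_mono : Monotone (reachWithin r x) :=
  monotone_nat_of_le_succ fun _ => subset_union_left

theorem mem_reachWithin_succ {k : ℕ} {a c : α} (ha : a ∈ reachWithin r x k) (h : r a c) :
    c ∈ reachWithin r x (k + 1) :=
  Or.inr ⟨a, ha, h⟩

theorem reachWithin_subset_setOf_reflTransGen (k : ℕ) :
    reachWithin r x k ⊆ {y | ReflTransGen r x y} := by
  induction k with
  | zero => rintro _ rfl; exact .refl
  | succ k ih =>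
    rintro c (hc | ⟨a, ha, hac⟩)
    exacts [ih hc, (ih ha).tail hac]

theorem reachWithin_mono_rel {r' : α → α → Prop} (h : ∀ a c, r a c → r' a c) (k : ℕ) :
    reachWithin r x k ⊆ reachWithin r' x k := by
  induction k with
  | zero => exact subset_rfl
  | succ k ih =>
    rintro c (hc | ⟨a, ha, hac⟩)
    exacts [Or.inl (ih hc), mem_reachWithin_succ (ih ha) (h a c hac)]

theorem reachWithin_finite (h : ∀ a, {c | r a c}.Finite) (k : ℕ) :
    (reachWithin r x k).Finite := by
  induction k with
  | zero => exact finite_singleton x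
  | succ k ih =>
    refine ih.union ((ih.biUnion fun a _ => h a).subset ?_)
    rintro c ⟨a, ha, hac⟩
    exact mem_biUnion ha hac

theorem setOf_reflTransGen_subset_of_reachWithin_succ_subset {k : ℕ}
    (hk : reachWithin r x (k + 1) ⊆ reachWithin r x k) :
    {y | ReflTransGen r x y} ⊆ reachWithin r x k := by
  intro y hy
  induction hy with
  | refl => exact reachWithin_mono k.zero_le rfl
  | tail _ hbc ih => exact hk (mem_reachWithin_succ ih hbc)

theorem setOf_reflTransGen_subset_or_ncard_reachWithin_lt
    (hfin : {y | ReflTransGen r x y}.Finite) (k : ℕ) :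
    {y | ReflTransGen r x y} ⊆ reachWithin r x k ∨
      (reachWithin r x k).ncard < (reachWithin r x (k + 1)).ncard := by
  by_cases hk : reachWithin r x (k + 1) ⊆ reachWithin r x k
  · exact .inl (setOf_reflTransGen_subset_of_reachWithin_succ_subset hk)
  · exact .inr (ncard_lt_ncard (ssubset_of_subset_not_subset (reachWithin_mono k.le_succ) hk)
      (hfin.subset (reachWithin_subset_setOf_reflTransGen _)))

/-- The sets `reachWithin r x k` grow strictly until they stabilise, and they cannot grow
strictly `n + 1` times inside a set of size `n + 1`. -/
theorem setOf_reflTransGen_subset_reachWithin {n : ℕ}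
    (hn : {y | ReflTransGen r x y}.ncard = n + 1) :
    {y | ReflTransGen r x y} ⊆ reachWithin r x n := by
  have hfin : {y | ReflTransGen r x y}.Finite := finite_of_ncard_pos (by omega)
  have key : ∀ k, {y | ReflTransGen r x y} ⊆ reachWithin r x k ∨
      k + 2 ≤ (reachWithin r x (k + 1)).ncard := by
    intro k
    induction k with
    | zero =>
      refine (setOf_reflTransGen_subset_or_ncard_reachWithin_lt hfin 0).imp id fun h => ?_
      rwa [reachWithin, ncard_singleton] at h
    | succ k ih =>
      rcases ih with h | h
      · exact .inl (h.trans (reachWithin_mono k.le_succ))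
      · exact (setOf_reflTransGen_subset_or_ncard_reachWithin_lt hfin (k + 1)).imp id
          fun h' => by omega
  refine (key n).resolve_right fun h => ?_
  have := ncard_le_ncard (reachWithin_subset_setOf_reflTransGen (n + 1)) hfin
  omega

theorem setOf_reflTransGen_eq_of_forall_mem {r' : α → α → Prop}
    (h : ∀ a, ReflTransGen r x a → ∀ c, r a c ↔ r' a c) :
    {y | ReflTransGen r' x y} = {y | ReflTransGen r x y} := by
  ext y
  constructor
  · intro hy
    induction hy with
    | refl => exact .refl
    | tail _ hbc ih => exact ih.tail ((h _ ih _).2 hbc)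
  · intro hy
    induction hy with
    | refl => exact .refl
    | tail hb hbc ih => exact ih.tail ((h _ hb _).1 hbc)

end Relation

section BoolCylinder

variable {Ω ι : Type*} (X : ι → Ω → Bool)

def boolCylinder [DecidableEq ι] (E F : Finset ι) : Set Ω :=
  {ω | ∀ i ∈ E, X i ω = decide (i ∈ F)}

def IsDeterminedBy (E : Finset ι) (A : Set Ω) : Prop :=
  ∀ ω ω', (∀ i ∈ E, X i ω = X i ω') → ω ∈ A → ω' ∈ A

variable {X}

section

variable [DecidableEq ι]

theorem mem_boolCylinder_filter (E : Finset ι) (ω : Ω) :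
    ω ∈ boolCylinder X E (E.filter fun i => X i ω) := by
  intro i hi
  simp [hi]

theorem eq_of_mem_boolCylinder {E F : Finset ι} {ω ω' : Ω} (hω : ω ∈ boolCylinder X E F)
    (hω' : ω' ∈ boolCylinder X E F) : ∀ i ∈ E, X i ω = X i ω' :=
  fun i hi => (hω i hi).trans (hω' i hi).symm

theorem pairwiseDisjoint_boolCylinder (E : Finset ι) :
    (E.powerset : Set (Finset ι)).PairwiseDisjoint (boolCylinder X E) := by
  intro F hF F' hF' hne
  refine Set.disjoint_left.2 fun ω hω hω' => hne (Finset.ext fun i => ?_)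
  simp only [Finset.coe_powerset, mem_preimage, mem_powerset_iff, Finset.coe_subset] at hF hF'
  by_cases hi : i ∈ E
  · simpa using (hω i hi).symm.trans (hω' i hi)
  · exact iff_of_false (fun h => hi (hF h)) fun h => hi (hF' h)

theorem measurableSet_boolCylinder [MeasurableSpace Ω] (hX : ∀ i, Measurable (X i))
    (E F : Finset ι) : MeasurableSet (boolCylinder X E F) := by
  have : boolCylinder X E F = ⋂ i ∈ E, X i ⁻¹' {decide (i ∈ F)} := by
    ext; simp [boolCylinder]
  rw [this]
  exact Finset.measurableSet_biInter E fun i _ => hX i (measurableSet_singleton _)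

theorem IsDeterminedBy.exists_eq_biUnion {E : Finset ι} {A : Set Ω}
    (hA : IsDeterminedBy X E A) : ∃ T ⊆ E.powerset, A = ⋃ F ∈ T, boolCylinder X E F := by
  classical
  refine ⟨E.powerset.filter fun F => (boolCylinder X E F ∩ A).Nonempty,
    Finset.filter_subset _ _, Set.ext fun ω => ⟨fun hω => ?_, fun hω => ?_⟩⟩
  · refine mem_biUnion (Finset.mem_filter.2 ⟨?_, ω, mem_boolCylinder_filter E ω, hω⟩)
      (mem_boolCylinder_filter E ω)
    exact Finset.mem_powerset.2 (Finset.filter_subset _ _)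
  · obtain ⟨F, hF, hωF⟩ := mem_iUnion₂.1 hω
    obtain ⟨ω', hω'F, hω'A⟩ := (Finset.mem_filter.1 hF).2
    exact hA ω' ω (eq_of_mem_boolCylinder hω'F hωF) hω'A

theorem IsDeterminedBy.exists_measure_eq_sum [MeasurableSpace Ω] (hX : ∀ i, Measurable (X i))
    {E : Finset ι} {A : Set Ω} (hA : IsDeterminedBy X E A) :
    ∃ T ⊆ E.powerset, ∀ μ : Measure Ω, μ A = ∑ F ∈ T, μ (boolCylinder X E F) := by
  obtain ⟨T, hT, rfl⟩ := hA.exists_eq_biUnion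
  exact ⟨T, hT, fun μ => measure_biUnion_finset
    ((pairwiseDisjoint_boolCylinder E).subset (by exact_mod_cast hT))
    fun F _ => measurableSet_boolCylinder hX E F⟩

end

theorem IsDeterminedBy.measurableSet [MeasurableSpace Ω] (hX : ∀ i, Measurable (X i))
    {E : Finset ι} {A : Set Ω} (hA : IsDeterminedBy X E A) : MeasurableSet A := by
  classical
  obtain ⟨T, -, rfl⟩ := hA.exists_eq_biUnion
  exact Finset.measurableSet_biUnion T fun F _ => measurableSet_boolCylinder hX E F

end BoolCylinder

section Percolation

variable {G : Type*} [Group G] {S : Finset G}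

def cayleyBall (S : Finset G) : ℕ → Set G :=
  Relation.reachWithin (fun a c => c * a⁻¹ ∈ S) 1

theorem cayleyBall_finite (S : Finset G) (k : ℕ) : (cayleyBall S k).Finite :=
  Relation.reachWithin_finite (fun a => S.finite_toSet.preimage (mul_left_injective a⁻¹).injOn) k

theorem percCluster_subset_cayleyBall {ω : G → G → Bool} {n : ℕ}
    (hn : (percCluster S ω univ 1).ncard = n + 1) : percCluster S ω univ 1 ⊆ cayleyBall S n :=
  (Relation.setOf_reflTransGen_subset_reachWithin hn).trans
    (Relation.reachWithin_mono_rel (fun _ _ h => h.2.2.1) n)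

/-- A cluster of size `n + 1` lies in the ball of radius `n`, so it and its outer boundary lie in
the ball of radius `n + 1`. -/
theorem percCluster_eq_of_eqOn_cayleyBall (hsym : ∀ s ∈ S, s⁻¹ ∈ S) {ω ω' : G → G → Bool}
    {n : ℕ} (hn : (percCluster S ω univ 1).ncard = n + 1)
    (hagree : ∀ g ∈ cayleyBall S (n + 1), ∀ s ∈ S, ω g s = ω' g s) :
    percCluster S ω' univ 1 = percCluster S ω univ 1 := by
  refine Relation.setOf_reflTransGen_eq_of_forall_mem fun a haC c => ?_
  have ha : a ∈ cayleyBall S n := percCluster_subset_cayleyBall hn haC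
  by_cases hs : c * a⁻¹ ∈ S
  · have hc : c ∈ cayleyBall S (n + 1) := Relation.mem_reachWithin_succ ha hs
    have hs' : a * c⁻¹ ∈ S := by simpa using hsym _ hs
    simp only [percStep, hagree a (Relation.reachWithin_mono n.le_succ ha) _ hs,
      hagree c hc _ hs']
  · simp [percStep, hs]

theorem isDeterminedBy_ncard_percCluster (hsym : ∀ s ∈ S, s⁻¹ ∈ S) (n : ℕ) :
    IsDeterminedBy (fun (q : G × S) (ω : G → G → Bool) => ω q.1 q.2)
      ((cayleyBall_finite S (n + 1)).toFinset ×ˢ Finset.univ)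
      {ω | (percCluster S ω univ 1).ncard = n + 1} := by
  intro ω ω' hagree hn
  have hagree' : ∀ g ∈ cayleyBall S (n + 1), ∀ s ∈ S, ω g s = ω' g s := fun g hg s hs =>
    hagree (g, ⟨s, hs⟩) (by simpa using hg)
  show (percCluster S ω' univ 1).ncard = n + 1
  rwa [percCluster_eq_of_eqOn_cayleyBall hsym hn hagree']

end Percolation

theorem tsum_tail_one_div_succ_mul_le {a : ℕ → ℝ} (ha : 0 ≤ a)
    (hle : ∀ T : Finset ℕ, ∑ n ∈ T, a n ≤ 1) (N : ℕ) :
    ∑' k, 1 / ((k + N : ℕ) + 1 : ℝ) * a (k + N) ≤ 1 / (N + 1) := by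
  refine tsum_le_of_sum_le' (by positivity) fun T => ?_
  have hweight : ∀ k : ℕ, 1 / ((k + N : ℕ) + 1 : ℝ) ≤ 1 / (N + 1) := fun k =>
    one_div_le_one_div_of_le (by positivity)
      (by push_cast; linarith [(k.cast_nonneg : (0 : ℝ) ≤ k)])
  calc ∑ k ∈ T, 1 / ((k + N : ℕ) + 1 : ℝ) * a (k + N)
      ≤ ∑ k ∈ T, 1 / (N + 1 : ℝ) * a (k + N) :=
        Finset.sum_le_sum fun k _ => mul_le_mul_of_nonneg_right (hweight k) (ha _)
    _ = 1 / (N + 1) * ∑ n ∈ T.map (addRightEmbedding N), a n := by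
        rw [Finset.mul_sum, Finset.sum_map]; rfl
    _ ≤ 1 / (N + 1) := mul_le_of_le_one_right (by positivity) (hle _)

theorem continuousOn_tsum_one_div_mul {X : Type*} [TopologicalSpace X] {D : Set X}
    {a : ℕ → X → ℝ} (hcont : ∀ n, ContinuousOn (a n) D) (hnonneg : ∀ n, ∀ x ∈ D, 0 ≤ a n x)
    (hle : ∀ x ∈ D, ∀ T : Finset ℕ, ∑ n ∈ T, a n x ≤ 1) :
    ContinuousOn (fun x => ∑' n : ℕ, (1 / (n + 1 : ℝ)) * a n x) D := by
  refine TendstoUniformlyOn.continuousOn (p := atTop)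
    (F := fun N x => ∑ n ∈ Finset.range N, 1 / (n + 1 : ℝ) * a n x) ?_
    (Frequently.of_forall fun N => continuousOn_finsetSum _ fun n _ =>
      continuousOn_const.mul (hcont n))
  rw [Metric.tendstoUniformlyOn_iff]
  intro ε hε
  obtain ⟨N₀, hN₀⟩ := exists_nat_one_div_lt hε
  filter_upwards [eventually_ge_atTop N₀] with N hN x hx
  have ha : 0 ≤ fun n => a n x := fun n => hnonneg n x hx
  have hsum : Summable fun n : ℕ => 1 / ((n : ℝ) + 1) * a n x :=
    (summable_of_sum_le ha (hle x hx)).of_nonneg_of_le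
      (fun n => mul_nonneg (by positivity) (ha n))
      fun n => mul_le_of_le_one_left (ha n)
        (by rw [div_le_one (by positivity)]; linarith [(n.cast_nonneg : (0 : ℝ) ≤ n)])
  rw [Real.dist_eq, ← hsum.sum_add_tsum_nat_add N, add_sub_cancel_left,
    abs_of_nonneg (tsum_nonneg fun k => mul_nonneg (by positivity) (ha (k + N)))]
  calc _ ≤ 1 / ((N : ℝ) + 1) := tsum_tail_one_div_succ_mul_le ha (hle x hx) N
    _ ≤ 1 / ((N₀ : ℝ) + 1) :=
      one_div_le_one_div_of_le (by positivity) (by exact_mod_cast Nat.succ_le_succ hN)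
    _ < ε := hN₀

theorem continuousOn_toReal_measure_of_isDeterminedBy {G : Type*} {S : Finset G}
    {P : EuclideanSpace ℝ S → Measure (G → G → Bool)}
    (hcyl : ∀ ppar : EuclideanSpace ℝ S, (∀ s, 0 ≤ ppar s ∧ ppar s < 1) →
      ∀ (E : Finset (G × S)) (a : G × S → Bool),
        P ppar {ω | ∀ q ∈ E, ω q.1 ↑q.2 = a q} =
          ∏ q ∈ E, ENNReal.ofReal (if a q then ppar q.2 else 1 - ppar q.2))
    {E : Finset (G × S)} {A : Set (G → G → Bool)}
    (hA : IsDeterminedBy (fun (q : G × S) (ω : G → G → Bool) => ω q.1 q.2) E A) :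
    ContinuousOn (fun ppar => (P ppar A).toReal) {ppar | ∀ s, 0 ≤ ppar s ∧ ppar s < 1} := by
  classical
  obtain ⟨T, -, hT⟩ := hA.exists_measure_eq_sum fun q => by fun_prop
  have hcont : Continuous fun ppar : EuclideanSpace ℝ S =>
      ∑ F ∈ T, ∏ q ∈ E, if q ∈ F then ppar q.2 else 1 - ppar q.2 := by
    refine continuous_finsetSum _ fun F _ => continuous_finsetProd _ fun q _ => ?_
    split_ifs <;> fun_prop
  refine hcont.continuousOn.congr fun ppar hp => ?_
  have hweight : ∀ F : Finset (G × S), ∀ q ∈ E,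
      0 ≤ if q ∈ F then ppar q.2 else 1 - ppar q.2 := fun F q _ => by
    split_ifs <;> linarith [hp q.2]
  have hcylF : ∀ F : Finset (G × S),
      P ppar (boolCylinder (fun (q : G × S) ω => ω q.1 q.2) E F) =
        ENNReal.ofReal (∏ q ∈ E, if q ∈ F then ppar q.2 else 1 - ppar q.2) := fun F => by
    rw [ENNReal.ofReal_prod_of_nonneg (hweight F)]
    convert hcyl ppar hp E fun q => decide (q ∈ F) using 1
    -- the two sides decide `q ∈ F` through different `Decidable` instances
    · congr 1
    · simp
  rw [hT, Finset.sum_congr rfl fun F _ => hcylF F,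
    ← ENNReal.ofReal_sum_of_nonneg fun F _ => Finset.prod_nonneg (hweight F),
    ENNReal.toReal_ofReal (Finset.sum_nonneg fun F _ => Finset.prod_nonneg (hweight F))]

theorem stmt_18_general {G : Type*} [Group G] (S : Finset G)
    (hsym : ∀ s ∈ S, s⁻¹ ∈ S)
    (P : EuclideanSpace ℝ {x // x ∈ S} → Measure (G → G → Bool))
    (hprob : ∀ ppar : EuclideanSpace ℝ {x // x ∈ S}, (∀ s, 0 ≤ ppar s ∧ ppar s < 1) →
      IsProbabilityMeasure (P ppar))
    -- P p is the product Bernoulli measure with parameters p: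
    (hcyl : ∀ ppar : EuclideanSpace ℝ {x // x ∈ S}, (∀ s, 0 ≤ ppar s ∧ ppar s < 1) →
      ∀ (E : Finset (G × {x // x ∈ S})) (a : G × {x // x ∈ S} → Bool),
        P ppar {ω | ∀ q ∈ E, ω q.1 ↑q.2 = a q} =
          ∏ q ∈ E, ENNReal.ofReal (if a q then ppar q.2 else 1 - ppar q.2)) :
    ContinuousOn
      (fun ppar : EuclideanSpace ℝ {x // x ∈ S} =>
        ∑' n : ℕ, (1 / (n + 1 : ℝ)) *
          ((P ppar) {ω | (percCluster S ω Set.univ 1).ncard = n + 1}).toReal)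
      {ppar : EuclideanSpace ℝ {x // x ∈ S} | ∀ s, 0 ≤ ppar s ∧ ppar s < 1} := by
  set A : ℕ → Set (G → G → Bool) := fun n => {ω | (percCluster S ω Set.univ 1).ncard = n + 1}
  have hdet := isDeterminedBy_ncard_percCluster hsym
  have hmeas : ∀ n, MeasurableSet (A n) := fun n => (hdet n).measurableSet fun q => by fun_prop
  have hdisj : Pairwise (Function.onFun Disjoint A) := fun i j hij =>
    Set.disjoint_left.2 fun ω (hi : _ = i + 1) (hj : _ = j + 1) => hij (by omega)
  refine continuousOn_tsum_one_div_mul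
    (fun n => continuousOn_toReal_measure_of_isDeterminedBy hcyl (hdet n))
    (fun _ _ _ => ENNReal.toReal_nonneg) fun ppar hp T => ?_
  have := hprob ppar hp
  calc ∑ n ∈ T, (P ppar (A n)).toReal = (P ppar).real (⋃ n ∈ T, A n) := by
        rw [measureReal_def, measure_biUnion_finset (hdisj.set_pairwise _) fun n _ => hmeas n,
          ENNReal.toReal_sum fun n _ => measure_ne_top _ _]
    _ ≤ 1 := measureReal_le_one

/-- Continuity of `p ↦ κ(p) = 𝔼_p(|C_id|⁻¹) = Σ_{n≥1} (1/n) ℙ_p(|C_id| = n)` on `[0,1)^S`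
with the ℓ²-metric (Lemma 8.9). -/
theorem stmt_18 {G : Type*} [Group G] (S : Finset G)
    (hsym : ∀ s ∈ S, s⁻¹ ∈ S) (hgen : Subgroup.closure (S : Set G) = ⊤)
    -- amenability of G: existence of a Følner sequence
    (ham : ∃ F : ℕ → Set G, (∀ n, (F n).Finite ∧ (F n).Nonempty) ∧
      ∀ K : Set G, K.Finite → K.Nonempty →
        Tendsto (fun n => ((symmDiff (F n) (K * F n)).ncard : ℝ) / ((F n).ncard : ℝ))
          atTop (nhds 0))
    (P : EuclideanSpace ℝ {x // x ∈ S} → Measure (G → G → Bool))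
    (hprob : ∀ ppar : EuclideanSpace ℝ {x // x ∈ S}, (∀ s, 0 ≤ ppar s ∧ ppar s < 1) →
      IsProbabilityMeasure (P ppar))
    -- P p is the product Bernoulli measure with parameters p:
    (hcyl : ∀ ppar : EuclideanSpace ℝ {x // x ∈ S}, (∀ s, 0 ≤ ppar s ∧ ppar s < 1) →
      ∀ (E : Finset (G × {x // x ∈ S})) (a : G × {x // x ∈ S} → Bool),
        P ppar {ω | ∀ q ∈ E, ω q.1 ↑q.2 = a q} =
          ∏ q ∈ E, ENNReal.ofReal (if a q then ppar q.2 else 1 - ppar q.2)) :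
    ContinuousOn
      (fun ppar : EuclideanSpace ℝ {x // x ∈ S} =>
        ∑' n : ℕ, (1 / (n + 1 : ℝ)) *
          ((P ppar) {ω | (percCluster S ω Set.univ 1).ncard = n + 1}).toReal)
      {ppar : EuclideanSpace ℝ {x // x ∈ S} | ∀ s, 0 ≤ ppar s ∧ ppar s < 1} :=
  stmt_18_general S hsym P hprob hcyl
end
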